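/- arXiv:2106.02379 — 4 statements merged into one kernel-verified Lean document; each statement's English description precedes it below -/
import Mathlib

section
/- Let V and W be finite-dimensional real inner product spaces. The map sending (A, Z) to A ∘ exp(-Z), from (linear isometric embeddings W → V) × (self-adjoint endomorphisms of W) to Hom(W, V), is injective with image exactly the set of injective linear maps W → V. -/
/-!
With `B := A ∘ exp (-Z)`, an isometry `A` (`A† A = 1`) and a self-adjoint `Z`, one gets
`B† B = exp (-2 Z)`. Injectivity: the exponential is injective on self-adjoint operators (compare
eigenvalues in an eigenbasis, using injectivity of `Real.exp`), so `B` determines `Z`, and then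
`A = B ∘ exp Z`. Surjectivity onto injective maps: `B† B` is positive definite, hence equal to
`exp Y` with `Y` self-adjoint (take `log` of the eigenvalues); `Z := -Y / 2` and `A := B ∘ exp Z`
satisfy `A† A = exp Z ∘ exp (-2 Z) ∘ exp Z = 1`.
-/

open scoped InnerProductSpace
open NormedSpace ContinuousLinearMap

theorem exp_mul_exp_neg {𝔸 : Type*} [NormedRing 𝔸] [NormedAlgebra ℚ 𝔸] [CompleteSpace 𝔸]
    (x : 𝔸) : exp x * exp (-x) = 1 := by
  rw [← exp_add_of_commute (Commute.refl x).neg_right, add_neg_cancel, exp_zero]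

theorem exp_neg_mul_exp {𝔸 : Type*} [NormedRing 𝔸] [NormedAlgebra ℚ 𝔸] [CompleteSpace 𝔸]
    (x : 𝔸) : exp (-x) * exp x = 1 := by
  simpa using exp_mul_exp_neg (-x)

-- The multiplicativity lemmas for `exp` are stated for Banach algebras over `ℚ`.
noncomputable local instance {E : Type*} [NormedAddCommGroup E] [NormedSpace ℝ E] :
    NormedAlgebra ℚ (E →L[ℝ] E) :=
  NormedAlgebra.restrictScalars ℚ ℝ _

section Exponential

variable {E F : Type*} [NormedAddCommGroup E] [NormedSpace ℝ E] [CompleteSpace E]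
  [NormedAddCommGroup F] [NormedSpace ℝ F]

theorem exp_apply_of_apply_eq_smul {Z : E →L[ℝ] E} {v : E} {c : ℝ} (h : Z v = c • v) :
    exp Z v = Real.exp c • v := by
  have hpow : ∀ n : ℕ, (Z ^ n) v = c ^ n • v := fun n => by
    induction n with
    | zero => simp
    | succ n ih => rw [pow_succ, mul_apply_eq_comp, h, map_smul, ih, smul_smul, pow_succ']
  have hZ := (exp_series_hasSum_exp' (𝕂 := ℝ) Z).mapL (apply ℝ E v)
  have hc := (exp_series_hasSum_exp' (𝕂 := ℝ) c).smul_const v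
  rw [Real.exp_eq_exp_ℝ]
  refine hZ.unique (hc.congr_fun fun n => ?_)
  simp [hpow, smul_smul]

theorem exp_apply_injective (Z : E →L[ℝ] E) : Function.Injective ⇑(exp Z) :=
  Function.LeftInverse.injective (g := ⇑(exp (-Z))) fun v => by
    simpa using DFunLike.congr_fun (exp_neg_mul_exp Z) v

theorem comp_exp_neg_comp_exp (A : E →L[ℝ] F) (Z : E →L[ℝ] E) :
    (A ∘L exp (-Z)) ∘L exp Z = A := by
  rw [comp_assoc, ← mul_def, exp_neg_mul_exp, one_def, comp_id]

end Exponential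

section FiniteDimensional

variable {E : Type*} [NormedAddCommGroup E] [InnerProductSpace ℝ E] [FiniteDimensional ℝ E]

theorem IsSelfAdjoint.apply_eq_smul_of_exp_apply_eq_smul {S : E →L[ℝ] E} (hS : IsSelfAdjoint S)
    {v : E} {c : ℝ} (h : NormedSpace.exp S v = Real.exp c • v) : S v = c • v := by
  have hsym := isSelfAdjoint_iff_isSymmetric.mp hS
  have hexp := isSelfAdjoint_iff_isSymmetric.mp hS.exp
  let b := hsym.eigenvectorBasis rfl
  let μ := hsym.eigenvalues rfl
  refine InnerProductSpace.ext_inner_left_basis b.toBasis fun i => ?_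
  have hb : S (b i) = μ i • b i := hsym.apply_eigenvectorBasis rfl i
  have hSb : ⟪b i, S v⟫_ℝ = μ i * ⟪b i, v⟫_ℝ := by
    rw [← real_inner_smul_left, ← hb]
    exact (hsym _ _).symm
  have hexpb : Real.exp (μ i) * ⟪b i, v⟫_ℝ = Real.exp c * ⟪b i, v⟫_ℝ := by
    rw [← real_inner_smul_left, ← exp_apply_of_apply_eq_smul hb, ← real_inner_smul_right, ← h]
    exact hexp _ _
  simp only [OrthonormalBasis.coe_toBasis, real_inner_smul_right, hSb]
  rcases eq_or_ne ⟪b i, v⟫_ℝ 0 with h0 | h0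
  · simp [h0]
  · rw [Real.exp_injective (mul_right_cancel₀ h0 hexpb)]

theorem IsSelfAdjoint.eq_of_exp_eq {S₁ S₂ : E →L[ℝ] E} (h₁ : IsSelfAdjoint S₁)
    (h₂ : IsSelfAdjoint S₂) (h : NormedSpace.exp S₁ = NormedSpace.exp S₂) : S₁ = S₂ := by
  have hsym := isSelfAdjoint_iff_isSymmetric.mp h₁
  let b := hsym.eigenvectorBasis rfl
  refine coe_injective (b.toBasis.ext fun i => ?_)
  have hb : S₁ (b i) = hsym.eigenvalues rfl i • b i := hsym.apply_eigenvectorBasis rfl i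
  simp only [OrthonormalBasis.coe_toBasis, coe_coe]
  rw [hb, h₂.apply_eq_smul_of_exp_apply_eq_smul (h ▸ exp_apply_of_apply_eq_smul hb)]

theorem OrthonormalBasis.exists_isSelfAdjoint_apply_eq_smul {ι : Type*} [Fintype ι]
    (b : OrthonormalBasis ι ℝ E) (f : ι → ℝ) :
    ∃ T : E →L[ℝ] E, IsSelfAdjoint T ∧ ∀ i, T (b i) = f i • b i := by
  classical
  refine ⟨∑ i, f i • InnerProductSpace.rankOne ℝ (b i) (b i), ?_, fun j => ?_⟩
  · refine isSelfAdjoint_sum _ fun i _ => (IsSelfAdjoint.all (f i)).smul ?_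
    exact isSelfAdjoint_iff'.mpr (InnerProductSpace.adjoint_rankOne _ _)
  · simp [b.inner_eq_ite]

theorem ContinuousLinearMap.IsPositive.exists_isSelfAdjoint_exp_eq {P : E →L[ℝ] E}
    (hP : P.IsPositive) (hinj : Function.Injective P) :
    ∃ Y : E →L[ℝ] E, IsSelfAdjoint Y ∧ exp Y = P := by
  have hsym := hP.toLinearMap.isSymmetric
  let b := hsym.eigenvectorBasis rfl
  let μ := hsym.eigenvalues rfl
  have hb : ∀ i, P (b i) = μ i • b i := hsym.apply_eigenvectorBasis rfl
  have hμ : ∀ i, 0 < μ i := fun i => (hP.toLinearMap.nonneg_eigenvalues rfl i).lt_of_ne' fun h0 =>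
    b.orthonormal.ne_zero i (hinj (by rw [hb, show μ i = 0 from h0, zero_smul, map_zero]))
  obtain ⟨Y, hY, hYb⟩ := b.exists_isSelfAdjoint_apply_eq_smul fun i => Real.log (μ i)
  refine ⟨Y, hY, coe_injective (b.toBasis.ext fun i => ?_)⟩
  simp only [OrthonormalBasis.coe_toBasis, coe_coe]
  rw [exp_apply_of_apply_eq_smul (hYb i), Real.exp_log (hμ i), hb]

end FiniteDimensional

theorem adjoint_comp_exp_comp_comp_exp {E F : Type*} [NormedAddCommGroup E]
    [InnerProductSpace ℝ E] [CompleteSpace E] [NormedAddCommGroup F] [InnerProductSpace ℝ F]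
    [CompleteSpace F] (A : E →L[ℝ] F) {Z : E →L[ℝ] E} (hZ : IsSelfAdjoint Z) :
    adjoint (A ∘L exp Z) ∘L (A ∘L exp Z) = exp Z * (adjoint A ∘L A) * exp Z := by
  rw [adjoint_comp, isSelfAdjoint_iff'.mp hZ.exp, mul_def, mul_def, comp_assoc, comp_assoc,
    comp_assoc]

/-- For finite-dimensional real inner product spaces `V`, `W`, the map
`(A, Z) ↦ A ∘ exp (-Z)`, from (linear isometric embeddings `W → V`) × (self-adjoint
endomorphisms of `W`) to `Hom(W, V)`, is injective, and its image is exactly the set of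
injective linear maps `W → V`. -/
theorem stmt4 {V W : Type*} [NormedAddCommGroup V] [InnerProductSpace ℝ V]
    [FiniteDimensional ℝ V] [NormedAddCommGroup W] [InnerProductSpace ℝ W]
    [FiniteDimensional ℝ W] :
    (∀ (A₁ A₂ : W →L[ℝ] V) (Z₁ Z₂ : W →L[ℝ] W),
        (∀ w w' : W, (inner ℝ (A₁ w) (A₁ w') : ℝ) = inner ℝ w w') →
        (∀ w w' : W, (inner ℝ (A₂ w) (A₂ w') : ℝ) = inner ℝ w w') →
        ContinuousLinearMap.adjoint Z₁ = Z₁ → ContinuousLinearMap.adjoint Z₂ = Z₂ →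
        A₁.comp (NormedSpace.exp (-Z₁)) = A₂.comp (NormedSpace.exp (-Z₂)) →
        A₁ = A₂ ∧ Z₁ = Z₂) ∧
    (∀ B : W →L[ℝ] V, Function.Injective ⇑B ↔
        ∃ (A : W →L[ℝ] V) (Z : W →L[ℝ] W),
          (∀ w w' : W, (inner ℝ (A w) (A w') : ℝ) = inner ℝ w w') ∧
          ContinuousLinearMap.adjoint Z = Z ∧ B = A.comp (NormedSpace.exp (-Z))) := by
  simp only [inner_map_map_iff_adjoint_comp_self, ← isSelfAdjoint_iff']
  refine ⟨fun A₁ A₂ Z₁ Z₂ hA₁ hA₂ hZ₁ hZ₂ h => ?_, fun B => ⟨fun hB => ?_, ?_⟩⟩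
  · have hexp : exp (-Z₁ + -Z₁) = exp (-Z₂ + -Z₂) :=
      calc exp (-Z₁ + -Z₁) = adjoint (A₁ ∘L exp (-Z₁)) ∘L (A₁ ∘L exp (-Z₁)) := by
            rw [adjoint_comp_exp_comp_comp_exp _ hZ₁.neg, hA₁, mul_one,
              exp_add_of_commute (.refl _)]
        _ = exp (-Z₂ + -Z₂) := by
            rw [h, adjoint_comp_exp_comp_comp_exp _ hZ₂.neg, hA₂, mul_one,
              exp_add_of_commute (.refl _)]
    have hZ : Z₁ = Z₂ := by
      simpa [← two_smul ℝ] using (hZ₁.neg.add hZ₁.neg).eq_of_exp_eq (hZ₂.neg.add hZ₂.neg) hexp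
    subst hZ
    exact ⟨by rw [← comp_exp_neg_comp_exp A₁ Z₁, h, comp_exp_neg_comp_exp], rfl⟩
  · obtain ⟨Y, hY, hexpY⟩ := (isPositive_adjoint_comp_self B).exists_isSelfAdjoint_exp_eq
      ((adjoint_comp_self_injective_iff B).mpr hB)
    set Z := -(2⁻¹ : ℝ) • Y
    have hZ : IsSelfAdjoint Z := (IsSelfAdjoint.all _).smul hY
    have hYZ : Y = -Z + -Z := by module
    refine ⟨B ∘L exp Z, Z, ?_, hZ, by simpa using (comp_exp_neg_comp_exp B (-Z)).symm⟩
    rw [adjoint_comp_exp_comp_comp_exp _ hZ, ← hexpY, hYZ, exp_add_of_commute (.refl _),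
      ← mul_assoc, exp_mul_exp_neg, one_mul, exp_neg_mul_exp]
  · rintro ⟨A, Z, hA, -, rfl⟩
    exact ((isometry_iff_adjoint_comp_self A).mpr hA).injective.comp (exp_apply_injective _)
end

section
/- Let W, V be finite-dimensional complex inner product spaces, X skew-adjoint on W, Y : W → V linear. With C = X/2 + Y*Y/4, g = (C - 1)(C + 1)⁻¹ and h = Y(1 - g)/2, the map (g, h) : W → W ⊕ V satisfies g*g + h*h = 1, i.e., it is a linear isometric embedding. -/
/-!
The operator `C = X/2 + Y†Y/4` is accretive: since `X` is skew-adjoint, `C + C† = Y†Y/2 ≥ 0`.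
Hence `C + 1` is injective, so invertible in finite dimension, and `g` is its Cayley transform.
With `B = (C + 1)⁻¹` one has `1 - g = 2B`, so `h = YB`, and the claim becomes the identity
`(C† - 1)(C - 1) + 2(C† + C) = (C† + 1)(C + 1)` conjugated by `B`.
-/

open ContinuousLinearMap RCLike

section Cayley

variable {R : Type*} [Ring R] {C B : R}

theorem one_sub_cayley (hB : (C + 1) * B = 1) : 1 - (C - 1) * B = 2 * B :=
  calc 1 - (C - 1) * B = (C + 1) * B - (C - 1) * B := by rw [hB]
    _ = 2 * B := by noncomm_ring

variable [StarRing R]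

theorem star_cayley_mul_cayley_add (hB : (C + 1) * B = 1) :
    star ((C - 1) * B) * ((C - 1) * B) + star B * (2 * (star C + C)) * B = 1 := by
  have key : (star C - 1) * (C - 1) + 2 * (star C + C) = star (C + 1) * (C + 1) := by
    rw [star_add, star_one]; noncomm_ring
  calc star ((C - 1) * B) * ((C - 1) * B) + star B * (2 * (star C + C)) * B
      = star B * ((star C - 1) * (C - 1) + 2 * (star C + C)) * B := by
        rw [star_mul, star_sub, star_one]; noncomm_ring
    _ = star ((C + 1) * B) * ((C + 1) * B) := by rw [key, star_mul]; noncomm_ring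
    _ = 1 := by rw [hB, star_one, one_mul]

end Cayley

section Accretive

variable {𝕜 E : Type*} [RCLike 𝕜] [NormedAddCommGroup E] [InnerProductSpace 𝕜 E]

theorem re_inner_nonneg_of_isPositive_add_adjoint [CompleteSpace E] {T : E →L[𝕜] E}
    (hT : (T + adjoint T).IsPositive) (x : E) : 0 ≤ re (inner 𝕜 x (T x)) := by
  have h := hT.re_inner_nonneg_right x
  rw [add_apply, inner_add_right, map_add, adjoint_inner_right, inner_re_symm (T x)] at h
  linarith

theorem injective_add_one_of_re_inner_nonneg {T : E →L[𝕜] E}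
    (hT : ∀ x, 0 ≤ re (inner 𝕜 x (T x))) : Function.Injective (T + 1 : E →L[𝕜] E) := by
  rw [← coe_coe, ← LinearMap.ker_eq_bot, LinearMap.ker_eq_bot']
  intro x hx
  have hTx : T x = -x := eq_neg_of_add_eq_zero_left hx
  have h := hT x
  rw [hTx, inner_neg_right, map_neg, inner_self_eq_norm_sq] at h
  exact norm_eq_zero.mp (by nlinarith [norm_nonneg x])

theorem isUnit_add_one_of_re_inner_nonneg [FiniteDimensional 𝕜 E] {T : E →L[𝕜] E}
    (hT : ∀ x, 0 ≤ re (inner 𝕜 x (T x))) : IsUnit (T + 1) := by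
  have := FiniteDimensional.complete 𝕜 E
  have hinj := injective_add_one_of_re_inner_nonneg hT
  exact isUnit_iff_bijective.mpr
    ⟨hinj, LinearMap.injective_iff_surjective (f := ((T + 1 : E →L[𝕜] E) : E →ₗ[𝕜] E)).mp hinj⟩

end Accretive

/-- With `C = X/2 + Y*Y/4`, `g = (C-1)(C+1)⁻¹` and `h = Y(1-g)/2`, the map
`(g, h) : W → W ⊕ V` satisfies `g*g + h*h = 1`, i.e. it is a linear isometric embedding. -/
theorem stmt7 {W V : Type*} [NormedAddCommGroup W] [InnerProductSpace ℂ W]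
    [FiniteDimensional ℂ W] [NormedAddCommGroup V] [InnerProductSpace ℂ V]
    [FiniteDimensional ℂ V]
    (X : W →L[ℂ] W) (hX : ContinuousLinearMap.adjoint X = -X) (Y : W →L[ℂ] V) :
    let C : W →L[ℂ] W :=
      (1 / 2 : ℂ) • X + (1 / 4 : ℂ) • ((ContinuousLinearMap.adjoint Y).comp Y)
    let g : W →L[ℂ] W := (C - 1) * Ring.inverse (C + 1)
    let h : W →L[ℂ] V := (1 / 2 : ℂ) • (Y.comp (1 - g))
    ContinuousLinearMap.adjoint g * g + (ContinuousLinearMap.adjoint h).comp h = 1 := by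
  intro C g h
  have hC_add_adjoint : C + adjoint C = (1 / 2 : ℂ) • (adjoint Y).comp Y := by
    simp only [C, map_add, map_smulₛₗ, adjoint_comp, adjoint_adjoint, hX, one_div, map_inv₀,
      map_ofNat]
    module
  have hunit : IsUnit (C + 1) := by
    apply isUnit_add_one_of_re_inner_nonneg
    apply re_inner_nonneg_of_isPositive_add_adjoint
    rw [hC_add_adjoint]
    exact (isPositive_adjoint_comp_self Y).smul_of_nonneg (by norm_num [Complex.nonneg_iff])
  set B := Ring.inverse (C + 1)
  have hB : (C + 1) * B = 1 := Ring.mul_inverse_cancel _ hunit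
  have hh : h = Y.comp B := by
    change (1 / 2 : ℂ) • Y.comp (1 - (C - 1) * B) = _
    rw [one_sub_cayley hB, two_mul, comp_add]
    module
  have hYY : (adjoint Y).comp Y = 2 * (star C + C) := by
    rw [star_eq_adjoint, add_comm, hC_add_adjoint, two_mul]
    module
  have hh_adj : (adjoint h).comp h = star B * (2 * (star C + C)) * B := by
    rw [hh, adjoint_comp, comp_assoc, ← comp_assoc (adjoint Y) Y, hYY, star_eq_adjoint]
    rfl
  rw [← star_eq_adjoint, hh_adj]
  exact star_cayley_mul_cayley_add hB
end

section
/- Every ℝ-algebra automorphism of ℍ fixes the reals, restricts to an isometry of the 3-dimensional subspace span_ℝ{i, j, k} (with inner product ⟨x, y⟩ = Re(conj(x)·y)), and this restriction has determinant 1; the resulting map Aut_ℝ(ℍ) → SO(3) is a group isomorphism. -/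
/-!
An algebra endomorphism `f` of `ℍ` maps a pure quaternion `x` to a square root of the
non-positive real `x² = -‖x‖²`, and such a square root is again pure. Hence `f` fixes real parts
and, writing `ℍ = ℝ ⊕ ℝ³`, acts as `(r, v) ↦ (r, A v)` for a `3 × 3` matrix `A`. As
`(0, u) (0, v) = (-u ⬝ v, u × v)`, a map of this shape is multiplicative exactly when `A` preserves
dot and cross products, which characterises `SO(3)`: the cross product is preserved because
`A u × A v = (adj A)ᵀ (u × v)` and `adj A = Aᵀ`, and conversely
`det A = A e₀ ⬝ (A e₁ × A e₂) = A e₀ ⬝ A e₀ = 1`.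
-/

open Quaternion

/-- The standard basis `(i, j, k)` of the pure quaternions. -/
noncomputable def pureBasis : Fin 3 → ℍ[ℝ] :=
  ![⟨0, 1, 0, 0⟩, ⟨0, 0, 1, 0⟩, ⟨0, 0, 0, 1⟩]

/-- Coordinates of a quaternion with respect to `(i, j, k)`. -/
noncomputable def pureCoord (m : Fin 3) (x : ℍ[ℝ]) : ℝ :=
  ![x.imI, x.imJ, x.imK] m

namespace Matrix

variable {n R : Type*} [Fintype n] [DecidableEq n] [CommRing R]

theorem mem_orthogonalGroup_iff_forall_dotProduct_mulVec {A : Matrix n n R} :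
    A ∈ orthogonalGroup n R ↔ ∀ u v, A *ᵥ u ⬝ᵥ A *ᵥ v = u ⬝ᵥ v := by
  have key : ∀ u v, A *ᵥ u ⬝ᵥ A *ᵥ v = (Aᵀ * A) *ᵥ u ⬝ᵥ v := fun u v => by
    rw [dotProduct_mulVec, ← mulVec_transpose, mulVec_mulVec]
  rw [mem_orthogonalGroup_iff']
  refine ⟨fun h u v => by rw [key, h, one_mulVec], fun h => ?_⟩
  ext i j
  have hij := h (Pi.single j 1) (Pi.single i 1)
  rw [key, mulVec_single_one, dotProduct_single_one, dotProduct_single_one, col_apply] at hij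
  rw [hij, one_apply, Pi.single_apply]

theorem cross_mulVec_mulVec (A : Matrix (Fin 3) (Fin 3) R) (u v : Fin 3 → R) :
    (A *ᵥ u) ⨯₃ (A *ᵥ v) = A.adjugateᵀ *ᵥ (u ⨯₃ v) := by
  ext i
  fin_cases i <;>
  · simp only [cross_apply, mulVec, dotProduct, Fin.sum_univ_three, adjugate_fin_three,
      transpose_apply, of_apply, Fin.isValue, cons_val, Fin.reduceFinMk]
    ring

theorem adjugate_eq_transpose_of_mem_specialOrthogonalGroup {A : Matrix n n R}
    (hA : A ∈ specialOrthogonalGroup n R) : A.adjugate = Aᵀ := by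
  obtain ⟨hO, hdet⟩ := mem_specialOrthogonalGroup_iff.mp hA
  calc A.adjugate = (Aᵀ * A) * A.adjugate := by
        rw [(mem_orthogonalGroup_iff' _ _).mp hO, one_mul]
    _ = Aᵀ := by rw [Matrix.mul_assoc, mul_adjugate, hdet, one_smul, Matrix.mul_one]

theorem mem_specialOrthogonalGroup_fin_three_iff {A : Matrix (Fin 3) (Fin 3) R} :
    A ∈ specialOrthogonalGroup (Fin 3) R ↔
      (∀ u v, A *ᵥ u ⬝ᵥ A *ᵥ v = u ⬝ᵥ v) ∧ ∀ u v, A *ᵥ (u ⨯₃ v) = (A *ᵥ u) ⨯₃ (A *ᵥ v) := by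
  rw [mem_specialOrthogonalGroup_iff, mem_orthogonalGroup_iff_forall_dotProduct_mulVec]
  refine ⟨fun ⟨hdot, hdet⟩ => ⟨hdot, fun u v => ?_⟩, fun ⟨hdot, hcross⟩ => ⟨hdot, ?_⟩⟩
  · have hA : A ∈ specialOrthogonalGroup (Fin 3) R := mem_specialOrthogonalGroup_iff.mpr
      ⟨mem_orthogonalGroup_iff_forall_dotProduct_mulVec.mpr hdot, hdet⟩
    rw [cross_mulVec_mulVec, adjugate_eq_transpose_of_mem_specialOrthogonalGroup hA,
      transpose_transpose]
  · have hcols : Aᵀ = ![A.col 0, A.col 1, A.col 2] := by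
      ext i j; fin_cases i <;> rfl
    have he : (Pi.single 1 1 : Fin 3 → R) ⨯₃ Pi.single 2 1 = Pi.single 0 1 := by
      ext i; fin_cases i <;> simp [cross_apply]
    rw [← det_transpose, hcols, ← triple_product_eq_det, ← mulVec_single_one, ← mulVec_single_one,
      ← mulVec_single_one, ← hcross, he, hdot, dotProduct_single_one, Pi.single_eq_same]

end Matrix

open Matrix

namespace Quaternion

section CommRing

variable {R : Type*} [CommRing R]

def imVec : ℍ[R] →ₗ[R] Fin 3 → R where
  toFun a := ![a.imI, a.imJ, a.imK]
  map_add' a b := by ext i; fin_cases i <;> rfl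
  map_smul' r a := by ext i; fin_cases i <;> rfl

def ofImVec : (Fin 3 → R) →ₗ[R] ℍ[R] where
  toFun v := ⟨0, v 0, v 1, v 2⟩
  map_add' _ _ := QuaternionAlgebra.ext (add_zero 0).symm rfl rfl rfl
  map_smul' r _ := QuaternionAlgebra.ext (smul_zero r).symm rfl rfl rfl

@[simp] theorem re_ofImVec (v : Fin 3 → R) : (ofImVec v).re = 0 := rfl

@[simp] theorem imVec_ofImVec (v : Fin 3 → R) : imVec (ofImVec v) = v := by
  ext i; fin_cases i <;> rfl

@[simp] theorem ofImVec_imVec (a : ℍ[R]) : ofImVec (imVec a) = a.im := rfl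

@[simp] theorem imVec_coe (r : R) : imVec (r : ℍ[R]) = 0 := by
  ext i; fin_cases i <;> rfl

theorem ext_re_imVec {a b : ℍ[R]} (hre : a.re = b.re) (him : imVec a = imVec b) : a = b := by
  ext
  exacts [hre, congrFun him 0, congrFun him 1, congrFun him 2]

theorem re_mul_eq_sub_dotProduct (a b : ℍ[R]) :
    (a * b).re = a.re * b.re - imVec a ⬝ᵥ imVec b := by
  simp only [re_mul, imVec, LinearMap.coe_mk, AddHom.coe_mk, vec3_dotProduct, cons_val,
    Fin.isValue]
  ring

theorem imVec_mul (a b : ℍ[R]) :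
    imVec (a * b) = a.re • imVec b + b.re • imVec a + imVec a ⨯₃ imVec b := by
  ext i
  fin_cases i <;>
  · simp only [imVec, LinearMap.coe_mk, AddHom.coe_mk, cross_apply, Pi.add_apply, Pi.smul_apply,
      smul_eq_mul, imI_mul, imJ_mul, imK_mul, Fin.isValue, cons_val, Fin.reduceFinMk]
    ring

def rotate (A : Matrix (Fin 3) (Fin 3) R) (a : ℍ[R]) : ℍ[R] :=
  a.re + ofImVec (A *ᵥ imVec a)

variable {A B : Matrix (Fin 3) (Fin 3) R}

@[simp] theorem re_rotate (a : ℍ[R]) : (rotate A a).re = a.re := by simp [rotate]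

@[simp] theorem imVec_rotate (a : ℍ[R]) : imVec (rotate A a) = A *ᵥ imVec a := by
  simp [rotate]

theorem rotate_rotate (a : ℍ[R]) : rotate A (rotate B a) = rotate (A * B) a :=
  ext_re_imVec (by simp) (by simp [mulVec_mulVec])

theorem rotate_one (a : ℍ[R]) : rotate 1 a = a :=
  ext_re_imVec (by simp) (by simp)

theorem rotate_add (a b : ℍ[R]) : rotate A (a + b) = rotate A a + rotate A b :=
  ext_re_imVec (by simp) (by simp [mulVec_add])

theorem rotate_coe (r : R) : rotate A r = r :=
  ext_re_imVec (by simp) (by simp)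

theorem rotate_mul_iff_mem_specialOrthogonalGroup :
    (∀ a b, rotate A (a * b) = rotate A a * rotate A b) ↔ A ∈ specialOrthogonalGroup (Fin 3) R := by
  rw [mem_specialOrthogonalGroup_fin_three_iff]
  refine ⟨fun h => ⟨fun u v => ?_, fun u v => ?_⟩, fun ⟨hdot, hcross⟩ a b => ?_⟩
  · have hre := congrArg (·.re) (h (ofImVec u) (ofImVec v))
    simp only [re_rotate, re_mul_eq_sub_dotProduct, imVec_rotate, re_ofImVec, imVec_ofImVec] at hre
    linear_combination hre
  · simpa [imVec_mul] using congrArg imVec (h (ofImVec u) (ofImVec v))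
  · refine ext_re_imVec ?_ ?_
    · simp only [re_rotate, imVec_rotate, re_mul_eq_sub_dotProduct, hdot]
    · simp [imVec_mul, mulVec_add, mulVec_smul, hcross]

def rotAlgEquiv (A : specialOrthogonalGroup (Fin 3) R) : ℍ[R] ≃ₐ[R] ℍ[R] where
  toFun := rotate A
  invFun := rotate ↑A⁻¹
  left_inv a := by simp [rotate_rotate, ← Submonoid.coe_mul, rotate_one]
  right_inv a := by simp [rotate_rotate, ← Submonoid.coe_mul, rotate_one]
  map_mul' := rotate_mul_iff_mem_specialOrthogonalGroup.mpr A.2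
  map_add' := rotate_add
  commutes' := rotate_coe

@[simp] theorem rotAlgEquiv_apply (A : specialOrthogonalGroup (Fin 3) R) (a : ℍ[R]) :
    rotAlgEquiv A a = rotate A a :=
  rfl

theorem map_coe {F : Type*} [FunLike F ℍ[R] ℍ[R]] [AlgHomClass F R ℍ[R] ℍ[R]] (f : F) (r : R) :
    f (r : ℍ[R]) = r :=
  AlgHomClass.commutes f r

def imMatrix (f : ℍ[R] →ₐ[R] ℍ[R]) : Matrix (Fin 3) (Fin 3) R :=
  LinearMap.toMatrix' (imVec ∘ₗ f.toLinearMap ∘ₗ ofImVec)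

theorem imMatrix_apply (f : ℍ[R] →ₐ[R] ℍ[R]) (m n : Fin 3) :
    imMatrix f m n = imVec (f (ofImVec (Pi.single n 1))) m :=
  LinearMap.toMatrix'_apply _ _ _

theorem imMatrix_mulVec (f : ℍ[R] →ₐ[R] ℍ[R]) (v : Fin 3 → R) :
    imMatrix f *ᵥ v = imVec (f (ofImVec v)) :=
  LinearMap.toMatrix'_mulVec _ _

theorem imMatrix_rotAlgEquiv (A : specialOrthogonalGroup (Fin 3) R) :
    imMatrix (rotAlgEquiv A : ℍ[R] →ₐ[R] ℍ[R]) = A :=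
  ext_iff_mulVec.mpr fun v => by simp [imMatrix_mulVec]

theorem imVec_map (f : ℍ[R] →ₐ[R] ℍ[R]) (a : ℍ[R]) : imVec (f a) = imMatrix f *ᵥ imVec a := by
  rw [imMatrix_mulVec, ofImVec_imVec]
  conv_lhs => rw [← re_add_im a, map_add, map_coe]
  simp

theorem imMatrix_comp (f g : ℍ[R] →ₐ[R] ℍ[R]) : imMatrix (f.comp g) = imMatrix f * imMatrix g :=
  ext_iff_mulVec.mpr fun v => by
    rw [← mulVec_mulVec, imMatrix_mulVec g, ← imVec_map, imMatrix_mulVec, AlgHom.comp_apply]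

end CommRing

section OrderedCommRing

variable {R : Type*} [CommRing R] [LinearOrder R] [IsStrictOrderedRing R]

theorem re_eq_zero_of_sq_eq_neg_coe {a : ℍ[R]} {s : R} (hs : 0 ≤ s) (h : a ^ 2 = -(s : ℍ[R])) :
    a.re = 0 := by
  have hre := congrArg (·.re) h
  have hI := congrArg (·.imI) h
  have hJ := congrArg (·.imJ) h
  have hK := congrArg (·.imK) h
  simp only [sq, re_mul, imI_mul, imJ_mul, imK_mul, re_neg, imI_neg, imJ_neg, imK_neg, re_coe,
    imI_coe, imJ_coe, imK_coe, neg_zero] at hre hI hJ hK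
  -- with `a = r + v`: `r² - ‖v‖² = -s` and `r vᵢ = 0` give `r⁴ = -r² s ≤ 0`
  have : a.re ^ 4 = 0 := by
    nlinarith [sq_nonneg a.re, sq_nonneg a.imI, sq_nonneg a.imJ, sq_nonneg a.imK]
  exact pow_eq_zero_iff (by norm_num) |>.mp this

section AlgHomClass

variable {F : Type*} [FunLike F ℍ[R] ℍ[R]] [AlgHomClass F R ℍ[R] ℍ[R]] (f : F)

theorem re_map_eq_zero {a : ℍ[R]} (ha : a.re = 0) : (f a).re = 0 := by
  refine re_eq_zero_of_sq_eq_neg_coe (normSq_nonneg (a := a)) ?_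
  rw [← map_pow, sq_eq_neg_normSq.mpr ha, map_neg, map_coe]

theorem re_map (a : ℍ[R]) : (f a).re = a.re := by
  conv_lhs => rw [← re_add_im a, map_add, map_coe]
  simp [re_map_eq_zero f (re_im a)]

theorem map_star (a : ℍ[R]) : f (star a) = star (f a) := by
  rw [star_eq_two_re_sub, star_eq_two_re_sub, map_sub, map_coe, re_map]

end AlgHomClass

theorem map_eq_rotate_imMatrix (f : ℍ[R] →ₐ[R] ℍ[R]) (a : ℍ[R]) : f a = rotate (imMatrix f) a :=
  ext_re_imVec (by simp [re_map]) (by simp [imVec_map])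

theorem imMatrix_mem_specialOrthogonalGroup (f : ℍ[R] →ₐ[R] ℍ[R]) :
    imMatrix f ∈ specialOrthogonalGroup (Fin 3) R :=
  rotate_mul_iff_mem_specialOrthogonalGroup.mp fun a b => by
    simp only [← map_eq_rotate_imMatrix, map_mul]

def algEquivSpecialOrthogonalGroup :
    (ℍ[R] ≃ₐ[R] ℍ[R]) ≃* specialOrthogonalGroup (Fin 3) R where
  toFun τ := ⟨imMatrix τ.toAlgHom, imMatrix_mem_specialOrthogonalGroup _⟩
  invFun := rotAlgEquiv
  left_inv τ := AlgEquiv.ext fun a => (map_eq_rotate_imMatrix (τ : ℍ[R] →ₐ[R] ℍ[R]) a).symm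
  right_inv A := Subtype.ext (imMatrix_rotAlgEquiv A)
  map_mul' τ σ := Subtype.ext (imMatrix_comp τ.toAlgHom σ.toAlgHom)

end OrderedCommRing

end Quaternion

/-- Every ℝ-algebra automorphism of ℍ fixes the reals, restricts to an isometry
of the pure quaternions `span_ℝ{i,j,k}` (with inner product `⟨x,y⟩ = Re(conj x · y)`) of
determinant 1, and the resulting map `Aut_ℝ(ℍ) → SO(3)` is a group isomorphism. -/
theorem stmt14 :
    (∀ (τ : ℍ[ℝ] ≃ₐ[ℝ] ℍ[ℝ]) (r : ℝ), τ (r : ℍ[ℝ]) = (r : ℍ[ℝ])) ∧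
    (∀ (τ : ℍ[ℝ] ≃ₐ[ℝ] ℍ[ℝ]) (x : ℍ[ℝ]), x.re = 0 → (τ x).re = 0) ∧
    (∀ (τ : ℍ[ℝ] ≃ₐ[ℝ] ℍ[ℝ]) (x y : ℍ[ℝ]), x.re = 0 → y.re = 0 →
      (star (τ x) * τ y).re = (star x * y).re) ∧
    ∃ e : (ℍ[ℝ] ≃ₐ[ℝ] ℍ[ℝ]) ≃* Matrix.specialOrthogonalGroup (Fin 3) ℝ,
      ∀ (τ : ℍ[ℝ] ≃ₐ[ℝ] ℍ[ℝ]) (m n : Fin 3),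
        ((e τ : Matrix (Fin 3) (Fin 3) ℝ)) m n = pureCoord m (τ (pureBasis n)) := by
  refine ⟨fun τ r => map_coe τ r, fun τ x hx => (re_map τ x).trans hx,
    fun τ x y _ _ => by simpa only [map_mul, Quaternion.map_star] using re_map τ (star x * y),
    algEquivSpecialOrthogonalGroup, fun τ m n => ?_⟩
  have hbasis : ofImVec (Pi.single n 1) = pureBasis n := by
    fin_cases n <;> rfl
  exact (imMatrix_apply _ m n).trans (by rw [hbasis]; rfl)
end

section
/- Let W be a finite-dimensional quaternionic inner product space with underlying real inner product space uW (inner product ⟨x,y⟩ = Re[x,y]). The map ζ : W → uW ⊗_ℝ ℍ defined by ζ(x) = (1/2)(x⊗1 - xi⊗i - xj⊗j - xk⊗k) is right ℍ-linear and isometric: [ζ(x), ζ(y)] = [x, y] for all x, y ∈ W. -/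
open Quaternion

/-- The standard real basis `(1, i, j, k)` of ℍ. -/
noncomputable def qBasis : Fin 4 → ℍ[ℝ] :=
  ![1, ⟨0, 1, 0, 0⟩, ⟨0, 0, 1, 0⟩, ⟨0, 0, 0, 1⟩]

/-- Coordinates of a quaternion with respect to `(1, i, j, k)`. -/
noncomputable def qCoord (q : ℍ[ℝ]) : Fin 4 → ℝ :=
  ![q.re, q.imI, q.imJ, q.imK]

/-- We model `uW ⊗_ℝ ℍ` as quadruples `(w₀, w₁, w₂, w₃) : Fin 4 → W`, standing for
`w₀⊗1 + w₁⊗i + w₂⊗j + w₃⊗k`.  The right ℍ-action is then given by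
`(Σ_a w_a ⊗ e_a)·μ = Σ_b (Σ_a coord_b(e_a μ) • w_a) ⊗ e_b`. -/
noncomputable def tensorRMul {W : Type*} [AddCommGroup W] [Module ℝ W]
    (w : Fin 4 → W) (μ : ℍ[ℝ]) : Fin 4 → W :=
  fun b => ∑ a, qCoord (qBasis a * μ) b • w a

/-- The ℍ-valued inner product on `uW ⊗_ℝ ℍ` (in the quadruple model), determined by
`[x⊗λ, y⊗μ] = conj(λ)·⟨x,y⟩·μ`, where `⟨x,y⟩ = Re [x,y]` is the underlying real inner
product of the quaternionic inner product `inn` on `W`. -/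
noncomputable def tensorInner {W : Type*} (inn : W → W → ℍ[ℝ])
    (x y : Fin 4 → W) : ℍ[ℝ] :=
  ∑ a, ∑ b, star (qBasis a) * (((inn (x a) (y b)).re : ℝ) : ℍ[ℝ]) * qBasis b

/-- The map `ζ : W → uW ⊗_ℝ ℍ`, `ζ(x) = (1/2)(x⊗1 - xi⊗i - xj⊗j - xk⊗k)`, in the quadruple
model of `uW ⊗_ℝ ℍ`. -/
noncomputable def zetaMap {W : Type*} [AddCommGroup W] [Module ℝ W]
    (rsmul : W → ℍ[ℝ] → W) (x : W) : Fin 4 → W :=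
  ![(1 / 2 : ℝ) • x,
    -((1 / 2 : ℝ) • rsmul x (qBasis 1)),
    -((1 / 2 : ℝ) • rsmul x (qBasis 2)),
    -((1 / 2 : ℝ) • rsmul x (qBasis 3))]

/-! With `e_a` the basis `1, i, j, k`, the components of `ζ(x)` are `x·c_a` with
`c_a = ½ conj(e_a)`. Hence `ζ` is additive, and right linearity and isometry reduce to two identities
in ℍ: `∑_a coord_b(e_a μ) c_a = μ c_b` and `∑_{a,b} conj(e_a) Re(conj(c_a) q c_b) e_b = q`. Both follow
from the coordinate expansion `q = ∑_b Re(q conj(e_b)) e_b` together with `conj(e_a) e_a = 1`. -/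

@[simp] lemma qBasis_zero : qBasis 0 = 1 := rfl

@[simp] lemma re_qBasis (a : Fin 4) : (qBasis a).re = ![1, 0, 0, 0] a := by fin_cases a <;> rfl
@[simp] lemma imI_qBasis (a : Fin 4) : (qBasis a).imI = ![0, 1, 0, 0] a := by fin_cases a <;> rfl
@[simp] lemma imJ_qBasis (a : Fin 4) : (qBasis a).imJ = ![0, 0, 1, 0] a := by fin_cases a <;> rfl
@[simp] lemma imK_qBasis (a : Fin 4) : (qBasis a).imK = ![0, 0, 0, 1] a := by fin_cases a <;> rfl

lemma star_qBasis_of_ne_zero {a : Fin 4} (ha : a ≠ 0) : star (qBasis a) = -qBasis a := by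
  fin_cases a
  · exact absurd rfl ha
  all_goals ext <;> simp

lemma star_qBasis_mul_self (a : Fin 4) : star (qBasis a) * qBasis a = 1 := by
  fin_cases a <;> ext <;> simp

lemma sum_qCoord_smul_qBasis (q : ℍ[ℝ]) : ∑ b, qCoord q b • qBasis b = q := by
  ext <;> simp [Fin.sum_univ_four, qCoord]

lemma qCoord_eq_re_mul_star_qBasis (q : ℍ[ℝ]) (b : Fin 4) :
    qCoord q b = (q * star (qBasis b)).re := by
  fin_cases b <;> simp [qCoord]

lemma sum_re_qBasis_mul_smul_star_qBasis (p : ℍ[ℝ]) :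
    ∑ a, (qBasis a * p).re • star (qBasis a) = p :=
  calc ∑ a, (qBasis a * p).re • star (qBasis a)
      = star (∑ a, qCoord (star p) a • qBasis a) := by
        simp only [star_sum, Quaternion.star_smul, qCoord_eq_re_mul_star_qBasis,
          ← star_mul, Quaternion.re_star]
    _ = p := by rw [sum_qCoord_smul_qBasis, star_star]

noncomputable def zetaCoeff (a : Fin 4) : ℍ[ℝ] := (1 / 2 : ℝ) • star (qBasis a)

lemma sum_qCoord_smul_zetaCoeff (μ : ℍ[ℝ]) (b : Fin 4) :
    ∑ a, qCoord (qBasis a * μ) b • zetaCoeff a = μ * zetaCoeff b := by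
  simp only [zetaCoeff, qCoord_eq_re_mul_star_qBasis, mul_assoc, smul_comm _ (1 / 2 : ℝ),
    ← Finset.smul_sum, sum_re_qBasis_mul_smul_star_qBasis, mul_smul_comm]

lemma re_star_zetaCoeff_mul_mul_zetaCoeff (a b : Fin 4) (q : ℍ[ℝ]) :
    (star (zetaCoeff a) * q * zetaCoeff b).re = (1 / 4 : ℝ) * qCoord (qBasis a * q) b := by
  simp only [zetaCoeff, Quaternion.star_smul, star_star, smul_mul_assoc,
    mul_smul_comm, Quaternion.re_smul, qCoord_eq_re_mul_star_qBasis, smul_eq_mul]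
  ring

lemma sum_star_qBasis_mul_re_zetaCoeff_mul_qBasis (q : ℍ[ℝ]) :
    ∑ a, ∑ b, star (qBasis a) * (((star (zetaCoeff a) * q * zetaCoeff b).re : ℝ) : ℍ[ℝ]) *
      qBasis b = q := by
  have row (a : Fin 4) :
      ∑ b, star (qBasis a) * (((star (zetaCoeff a) * q * zetaCoeff b).re : ℝ) : ℍ[ℝ]) * qBasis b
        = (1 / 4 : ℝ) • q := by
    simp_rw [mul_assoc (star (qBasis a)), ← Finset.mul_sum, re_star_zetaCoeff_mul_mul_zetaCoeff,
      Quaternion.coe_mul_eq_smul, ← smul_smul, ← Finset.smul_sum, sum_qCoord_smul_qBasis,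
      mul_smul_comm, ← mul_assoc, star_qBasis_mul_self, one_mul]
  rw [Finset.sum_congr rfl fun a _ => row a, Finset.sum_const, Finset.card_univ, Fintype.card_fin,
    ← Nat.cast_smul_eq_nsmul ℝ, smul_smul]
  norm_num

section RightAction

variable {W : Type*} [AddCommGroup W] [Module ℝ W] {rsmul : W → ℍ[ℝ] → W}

lemma rsmul_real_smul
    (rsmul_mul : ∀ (x : W) (q q' : ℍ[ℝ]), rsmul (rsmul x q) q' = rsmul x (q * q'))
    (rsmul_real : ∀ (x : W) (r : ℝ), rsmul x (r : ℍ[ℝ]) = r • x) (x : W) (r : ℝ) (q : ℍ[ℝ]) :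
    rsmul x (r • q) = r • rsmul x q := by
  rw [← Quaternion.mul_coe_eq_smul, ← rsmul_mul, rsmul_real]

lemma rsmul_sum_smul
    (rsmul_radd : ∀ (x : W) (q q' : ℍ[ℝ]), rsmul x (q + q') = rsmul x q + rsmul x q')
    (rsmul_mul : ∀ (x : W) (q q' : ℍ[ℝ]), rsmul (rsmul x q) q' = rsmul x (q * q'))
    (rsmul_real : ∀ (x : W) (r : ℝ), rsmul x (r : ℍ[ℝ]) = r • x)
    {ι : Type*} (s : Finset ι) (x : W) (c : ι → ℝ) (q : ι → ℍ[ℝ]) :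
    rsmul x (∑ a ∈ s, c a • q a) = ∑ a ∈ s, c a • rsmul x (q a) := by
  rw [← AddMonoidHom.mk'_apply (rsmul x) (rsmul_radd x), map_sum]
  simp only [AddMonoidHom.mk'_apply, rsmul_real_smul rsmul_mul rsmul_real]

lemma zetaMap_eq_rsmul_zetaCoeff
    (rsmul_mul : ∀ (x : W) (q q' : ℍ[ℝ]), rsmul (rsmul x q) q' = rsmul x (q * q'))
    (rsmul_real : ∀ (x : W) (r : ℝ), rsmul x (r : ℍ[ℝ]) = r • x) (x : W) :
    zetaMap rsmul x = fun b => rsmul x (zetaCoeff b) := by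
  have hsmul := rsmul_real_smul rsmul_mul rsmul_real x
  have hone : rsmul x 1 = x := by simpa using rsmul_real x 1
  funext b
  fin_cases b
  · simp [zetaMap, zetaCoeff, hsmul, hone]
  all_goals
    rw [zetaCoeff, star_qBasis_of_ne_zero (by decide), smul_neg, ← neg_smul, hsmul, neg_smul]
    rfl

end RightAction

theorem stmt15_general {W : Type*} [AddCommGroup W] [Module ℝ W]
    (rsmul : W → ℍ[ℝ] → W)
    (rsmul_add : ∀ (x y : W) (q : ℍ[ℝ]), rsmul (x + y) q = rsmul x q + rsmul y q)
    (rsmul_radd : ∀ (x : W) (q q' : ℍ[ℝ]), rsmul x (q + q') = rsmul x q + rsmul x q')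
    (rsmul_mul : ∀ (x : W) (q q' : ℍ[ℝ]), rsmul (rsmul x q) q' = rsmul x (q * q'))
    (rsmul_real : ∀ (x : W) (r : ℝ), rsmul x ((r : ℍ[ℝ])) = r • x)
    (inn : W → W → ℍ[ℝ])
    (inn_smul : ∀ (x y : W) (q q' : ℍ[ℝ]),
      inn (rsmul x q) (rsmul y q') = star q * inn x y * q') :
    (∀ x y : W, zetaMap rsmul (x + y) = zetaMap rsmul x + zetaMap rsmul y) ∧
    (∀ (x : W) (μ : ℍ[ℝ]), zetaMap rsmul (rsmul x μ) = tensorRMul (zetaMap rsmul x) μ) ∧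
    (∀ x y : W, tensorInner inn (zetaMap rsmul x) (zetaMap rsmul y) = inn x y) := by
  have hζ := zetaMap_eq_rsmul_zetaCoeff rsmul_mul rsmul_real
  refine ⟨fun x y => ?_, fun x μ => ?_, fun x y => ?_⟩
  · funext b
    simp only [hζ, rsmul_add, Pi.add_apply]
  · funext b
    simp only [hζ, tensorRMul, rsmul_mul, ← sum_qCoord_smul_zetaCoeff μ b,
      rsmul_sum_smul rsmul_radd rsmul_mul rsmul_real]
  · simp only [tensorInner, hζ, inn_smul]
    exact sum_star_qBasis_mul_re_zetaCoeff_mul_qBasis (inn x y)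

/-- For a finite-dimensional quaternionic inner product space `W` (encoded by a
real vector space with right ℍ-action `rsmul` and ℍ-valued inner product `inn`), the map
`ζ : W → uW ⊗_ℝ ℍ`, `ζ(x) = (1/2)(x⊗1 - xi⊗i - xj⊗j - xk⊗k)`, is additive, right ℍ-linear
and isometric: `[ζ(x), ζ(y)] = [x, y]`. -/
theorem stmt15 {W : Type*} [AddCommGroup W] [Module ℝ W] [FiniteDimensional ℝ W]
    (rsmul : W → ℍ[ℝ] → W)
    (rsmul_add : ∀ (x y : W) (q : ℍ[ℝ]), rsmul (x + y) q = rsmul x q + rsmul y q)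
    (rsmul_radd : ∀ (x : W) (q q' : ℍ[ℝ]), rsmul x (q + q') = rsmul x q + rsmul x q')
    (rsmul_mul : ∀ (x : W) (q q' : ℍ[ℝ]), rsmul (rsmul x q) q' = rsmul x (q * q'))
    (rsmul_one : ∀ x : W, rsmul x 1 = x)
    (rsmul_real : ∀ (x : W) (r : ℝ), rsmul x ((r : ℍ[ℝ])) = r • x)
    (inn : W → W → ℍ[ℝ])
    (inn_add_left : ∀ x y z : W, inn (x + y) z = inn x z + inn y z)
    (inn_add_right : ∀ x y z : W, inn x (y + z) = inn x y + inn x z)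
    (inn_smul : ∀ (x y : W) (q q' : ℍ[ℝ]),
      inn (rsmul x q) (rsmul y q') = star q * inn x y * q')
    (inn_conj : ∀ x y : W, inn y x = star (inn x y))
    (inn_pos : ∀ x : W, x ≠ 0 → ∃ r : ℝ, 0 < r ∧ inn x x = (r : ℍ[ℝ])) :
    (∀ x y : W, zetaMap rsmul (x + y) = zetaMap rsmul x + zetaMap rsmul y) ∧
    (∀ (x : W) (μ : ℍ[ℝ]), zetaMap rsmul (rsmul x μ) = tensorRMul (zetaMap rsmul x) μ) ∧
    (∀ x y : W, tensorInner inn (zetaMap rsmul x) (zetaMap rsmul y) = inn x y) :=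
  stmt15_general rsmul rsmul_add rsmul_radd rsmul_mul rsmul_real inn inn_smul
end
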